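/- arXiv:2510.23177 — 8 statements merged into one kernel-verified Lean document; each statement's English description precedes it below -/
import Mathlib

section
/- For every ε > 0, sup_{t ∈ [0,T]} |τ_ε⁻¹(t) − t| ≤ ε ∫₀ᵀ |m_ε(s)| ds, and for every t ∈ [0,T], the difference quotient (τ_ε⁻¹(t) − t)/ε converges, as ε → 0⁺, to −m̂(t) = −∫₀ᵗ m(s) ds. -/
/-!
With `σ = τ_ε⁻¹(t)`, the identity `τ_ε(σ) = σ + ε ∫₀^σ m_ε` gives `τ_ε⁻¹(t) - t = -ε ∫₀^σ m_ε`,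
which is the uniform bound. For the limit, `m_ε → m` in `L¹(0,T)`: the truncation converges by
dominated convergence (`|m̃_ε - m| ≤ 2|m|`), and its mean tends to `∫₀ᵀ m = 0`. Hence `σ → t`, and
`∫₀^σ m_ε → ∫₀^t m` because the error is at most `‖m_ε - m‖_{L¹}` plus the oscillation of the
continuous primitive of `m` between `σ` and `t`.
-/

open MeasureTheory Set Filter Topology

section Clamp

variable {c : ℝ}

lemma abs_max_neg_min_le (hc : 0 ≤ c) (x : ℝ) : |max (-c) (min x c)| ≤ |x| := by
  rw [abs_le]
  constructor
  · exact le_max_of_le_right (le_min (neg_abs_le x) (by linarith [abs_nonneg x]))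
  · exact max_le (by linarith [abs_nonneg x]) ((min_le_left x c).trans (le_abs_self x))

lemma max_neg_min_eq_self {x : ℝ} (hx : |x| ≤ c) : max (-c) (min x c) = x := by
  rw [min_eq_left (abs_le.1 hx).2, max_eq_right (abs_le.1 hx).1]

variable {α : Type*} [MeasurableSpace α] {μ : Measure α} {f : α → ℝ}

lemma aestronglyMeasurable_max_neg_min (hf : AEStronglyMeasurable f μ) (c : ℝ) :
    AEStronglyMeasurable (fun x => max (-c) (min (f x) c)) μ :=
  (continuous_const.max (continuous_id.min continuous_const)).comp_aestronglyMeasurable hf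

theorem tendsto_integral_abs_max_neg_min_sub (hf : Integrable f μ) :
    Tendsto (fun c => ∫ x, |max (-c) (min (f x) c) - f x| ∂μ) atTop (𝓝 0) := by
  have hlim : ∀ x, Tendsto (fun c => |max (-c) (min (f x) c) - f x|) atTop (𝓝 0) := fun x =>
    tendsto_const_nhds.congr' <| (eventually_ge_atTop |f x|).mono fun c hc => by
      simp only [max_neg_min_eq_self hc, sub_self, abs_zero]
  have hbound : ∀ᶠ c in atTop, ∀ᵐ x ∂μ, ‖|max (-c) (min (f x) c) - f x|‖ ≤ 2 * |f x| :=
    (eventually_ge_atTop 0).mono fun c hc => ae_of_all _ fun x => by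
      rw [Real.norm_eq_abs, abs_abs]
      linarith [abs_sub (max (-c) (min (f x) c)) (f x), abs_max_neg_min_le hc (f x)]
  simpa using tendsto_integral_filter_of_dominated_convergence _
    (Eventually.of_forall fun c =>
      ((aestronglyMeasurable_max_neg_min hf.1 c).sub hf.1).norm)
    hbound (hf.abs.const_mul 2) (ae_of_all _ hlim)

end Clamp

lemma tendsto_one_div_const_mul_nhdsGT_zero {c : ℝ} (hc : 0 < c) :
    Tendsto (fun ε : ℝ => 1 / (c * ε)) (𝓝[>] 0) atTop :=
  ((tendsto_inv_nhdsGT_zero (𝕜 := ℝ)).const_mul_atTop (one_div_pos.2 hc)).congr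
    fun ε => by rw [one_div, one_div, mul_inv]

section IntervalL1

variable {a b x : ℝ} {g h f : ℝ → ℝ} {ι : Type*} {l : Filter ι} {F : ι → ℝ → ℝ}

lemma IntervalIntegrable.max_neg_min {c : ℝ} (hf : IntervalIntegrable f volume a b) (hc : 0 ≤ c) :
    IntervalIntegrable (fun x => max (-c) (min (f x) c)) volume a b :=
  hf.mono_fun (aestronglyMeasurable_max_neg_min hf.def'.1 c)
    (ae_of_all _ fun x => by simpa only [Real.norm_eq_abs] using abs_max_neg_min_le hc (f x))

lemma intervalIntegral_one_add_mul (hg : IntervalIntegrable g volume a b)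
    (ε : ℝ) : ∫ u in a..b, (1 + ε * g u) = b - a + ε * ∫ u in a..b, g u := by
  rw [intervalIntegral.integral_add intervalIntegrable_const (hg.const_mul ε),
    intervalIntegral.integral_const_mul]
  simp

lemma abs_intervalIntegral_le_of_mem_Icc (hx : x ∈ Icc a b) (hg : IntervalIntegrable g volume a b) :
    |∫ y in a..x, g y| ≤ ∫ y in a..b, |g y| :=
  (intervalIntegral.abs_integral_le_integral_abs hx.1).trans <|
    intervalIntegral.integral_mono_interval le_rfl hx.1 hx.2
      (Eventually.of_forall fun _ => abs_nonneg _) hg.abs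

lemma abs_intervalIntegral_sub_le_of_mem_Icc (hx : x ∈ Icc a b)
    (hg : IntervalIntegrable g volume a b) (hh : IntervalIntegrable h volume a b) :
    |(∫ y in a..x, g y) - ∫ y in a..x, h y| ≤ ∫ y in a..b, |g y - h y| := by
  have hsub : uIcc a x ⊆ uIcc a b := uIcc_subset_uIcc_left (mem_uIcc_of_le hx.1 hx.2)
  rw [← intervalIntegral.integral_sub (hg.mono_set hsub) (hh.mono_set hsub)]
  exact abs_intervalIntegral_le_of_mem_Icc hx (hg.sub hh)

theorem tendsto_intervalIntegral_of_tendsto_abs_sub (hab : a ≤ b)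
    (hF : ∀ᶠ i in l, IntervalIntegrable (F i) volume a b) (hf : IntervalIntegrable f volume a b)
    (hL1 : Tendsto (fun i => ∫ y in a..b, |F i y - f y|) l (𝓝 0)) :
    Tendsto (fun i => ∫ y in a..b, F i y) l (𝓝 (∫ y in a..b, f y)) := by
  rw [tendsto_iff_norm_sub_tendsto_zero]
  refine squeeze_zero_norm' (hF.mono fun i hi => ?_) hL1
  rw [norm_norm]
  exact abs_intervalIntegral_sub_le_of_mem_Icc (right_mem_Icc.2 hab) hi hf

theorem tendsto_intervalIntegral_abs_of_tendsto_abs_sub (hab : a ≤ b)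
    (hF : ∀ᶠ i in l, IntervalIntegrable (F i) volume a b) (hf : IntervalIntegrable f volume a b)
    (hL1 : Tendsto (fun i => ∫ y in a..b, |F i y - f y|) l (𝓝 0)) :
    Tendsto (fun i => ∫ y in a..b, |F i y|) l (𝓝 (∫ y in a..b, |f y|)) := by
  refine tendsto_intervalIntegral_of_tendsto_abs_sub hab (hF.mono fun i hi => hi.abs) hf.abs
    (squeeze_zero' (Eventually.of_forall fun i => ?_) (hF.mono fun i hi => ?_) hL1)
  · exact intervalIntegral.integral_nonneg hab fun _ _ => abs_nonneg _
  · exact intervalIntegral.integral_mono_on hab (hi.abs.sub hf.abs).abs (hi.sub hf).abs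
      fun y _ => abs_abs_sub_abs_le_abs_sub _ _

theorem tendsto_intervalIntegral_upper_of_tendsto_abs_sub {t : ℝ} {σ : ι → ℝ} (ht : t ∈ Icc a b)
    (hF : ∀ᶠ i in l, IntervalIntegrable (F i) volume a b) (hf : IntervalIntegrable f volume a b)
    (hL1 : Tendsto (fun i => ∫ y in a..b, |F i y - f y|) l (𝓝 0))
    (hσ : Tendsto σ l (𝓝 t)) (hσmem : ∀ᶠ i in l, σ i ∈ Icc a b) :
    Tendsto (fun i => ∫ y in a..σ i, F i y) l (𝓝 (∫ y in a..t, f y)) := by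
  have hab : a ≤ b := ht.1.trans ht.2
  have herr : Tendsto (fun i => (∫ y in a..σ i, F i y) - ∫ y in a..σ i, f y) l (𝓝 0) := by
    refine squeeze_zero_norm' ((hF.and hσmem).mono fun i hi => ?_) hL1
    exact abs_intervalIntegral_sub_le_of_mem_Icc hi.2 hi.1 hf
  have hprim : Tendsto (fun i => ∫ y in a..σ i, f y) l (𝓝 (∫ y in a..t, f y)) := by
    rw [← uIcc_of_le hab] at ht hσmem
    exact ((intervalIntegral.continuousOn_primitive_interval' hf left_mem_uIcc t ht).tendsto).comp
      (tendsto_nhdsWithin_iff.2 ⟨hσ, hσmem⟩)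
  simpa only [sub_add_cancel, zero_add] using herr.add hprim

theorem tendsto_intervalIntegral_abs_recentered_sub {T : ℝ} (hT : 0 ≤ T)
    (hF : ∀ᶠ i in l, IntervalIntegrable (F i) volume 0 T) (hf : IntervalIntegrable f volume 0 T)
    (hf0 : ∫ y in 0..T, f y = 0) (hL1 : Tendsto (fun i => ∫ y in 0..T, |F i y - f y|) l (𝓝 0)) :
    Tendsto (fun i => ∫ y in 0..T, |F i y - 1 / T * (∫ u in 0..T, F i u) - f y|) l (𝓝 0) := by
  set mean : ι → ℝ := fun i => 1 / T * ∫ u in 0..T, F i u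
  have hmean : Tendsto mean l (𝓝 0) := by
    simpa only [hf0, mul_zero] using
      (tendsto_intervalIntegral_of_tendsto_abs_sub hT hF hf hL1).const_mul (1 / T)
  refine squeeze_zero' (Eventually.of_forall fun i => ?_) (hF.mono fun i hi => ?_)
    (by simpa using hL1.add (hmean.abs.const_mul T))
  · exact intervalIntegral.integral_nonneg hT fun _ _ => abs_nonneg _
  · calc ∫ y in 0..T, |F i y - mean i - f y|
        ≤ ∫ y in 0..T, (|F i y - f y| + |mean i|) :=
          intervalIntegral.integral_mono_on hT ((hi.sub intervalIntegrable_const).sub hf).abs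
            ((hi.sub hf).abs.add intervalIntegrable_const) fun y _ => by
              rw [sub_right_comm]; exact abs_sub _ _
      _ = (∫ y in 0..T, |F i y - f y|) + T * |mean i| := by
          rw [intervalIntegral.integral_add (hi.sub hf).abs intervalIntegrable_const]
          simp

end IntervalL1

section Reparametrization

variable {T ε t : ℝ} {g τ τinv : ℝ → ℝ}

lemma sub_eq_neg_mul_intervalIntegral_of_rightInvOn (hg : IntervalIntegrable g volume 0 T)
    (hτ : ∀ s, τ s = ∫ u in 0..s, (1 + ε * g u)) (hinv : RightInvOn τinv τ (Icc 0 T))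
    (hmaps : MapsTo τinv (Icc 0 T) (Icc 0 T)) (ht : t ∈ Icc 0 T) :
    τinv t - t = -(ε * ∫ u in 0..τinv t, g u) := by
  have hσ := hmaps ht
  have hτσ : τ (τinv t) = t := hinv ht
  rw [hτ, intervalIntegral_one_add_mul
    (hg.mono_set (uIcc_subset_uIcc_left (mem_uIcc_of_le hσ.1 hσ.2)))] at hτσ
  linarith

lemma abs_sub_le_mul_intervalIntegral_abs_of_rightInvOn (hε : 0 ≤ ε)
    (hg : IntervalIntegrable g volume 0 T) (hτ : ∀ s, τ s = ∫ u in 0..s, (1 + ε * g u))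
    (hinv : RightInvOn τinv τ (Icc 0 T)) (hmaps : MapsTo τinv (Icc 0 T) (Icc 0 T))
    (ht : t ∈ Icc 0 T) : |τinv t - t| ≤ ε * ∫ u in 0..T, |g u| := by
  rw [sub_eq_neg_mul_intervalIntegral_of_rightInvOn hg hτ hinv hmaps ht, abs_neg, abs_mul,
    abs_of_nonneg hε]
  exact mul_le_mul_of_nonneg_left (abs_intervalIntegral_le_of_mem_Icc (hmaps ht) hg) hε

end Reparametrization

/-- `sup_{t ∈ [0,T]} |τ_ε⁻¹(t) − t| ≤ ε ∫₀ᵀ |m_ε(s)| ds`, and for each `t ∈ [0,T]` the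
difference quotient `(τ_ε⁻¹(t) − t)/ε` converges to `−m̂(t) = −∫₀ᵗ m(s) ds` as `ε → 0⁺`. -/
theorem inverse_reparametrization_difference_quotient
    (T : ℝ) (hT : 0 < T) (m : ℝ → ℝ)
    (hm : MemLp m 2 (volume.restrict (Icc 0 T)))
    (hint : ∫ s in (0:ℝ)..T, m s = 0)
    (mtil meps : ℝ → ℝ → ℝ)
    (hmtil : ∀ ε s, mtil ε s = max (-(1 / (3 * ε))) (min (m s) (1 / (3 * ε))))
    (hmeps : ∀ ε s, meps ε s = mtil ε s - (1 / T) * ∫ u in (0:ℝ)..T, mtil ε u)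
    (τ : ℝ → ℝ → ℝ)
    (hτ : ∀ ε s, τ ε s = ∫ u in (0:ℝ)..s, (1 + ε * meps ε u))
    (τinv : ℝ → ℝ → ℝ)
    (hτinv : ∀ ε > (0:ℝ), InvOn (τinv ε) (τ ε) (Icc 0 T) (Icc 0 T) ∧
      MapsTo (τinv ε) (Icc 0 T) (Icc 0 T)) :
    (∀ ε > (0:ℝ), ∀ t ∈ Icc (0:ℝ) T,
      |τinv ε t - t| ≤ ε * ∫ s in (0:ℝ)..T, |meps ε s|) ∧
    (∀ t ∈ Icc (0:ℝ) T,
      Tendsto (fun ε : ℝ => (τinv ε t - t) / ε) (nhdsWithin 0 (Ioi 0))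
        (nhds (-∫ s in (0:ℝ)..t, m s))) := by
  have hmInt : IntervalIntegrable m volume 0 T :=
    (intervalIntegrable_iff_integrableOn_Icc_of_le hT.le).2 (hm.integrable one_le_two)
  have hmepsInt : ∀ ε > (0:ℝ), IntervalIntegrable (meps ε) volume 0 T := fun ε hε => by
    rw [funext (hmeps ε), funext (hmtil ε)]
    exact (hmInt.max_neg_min (by positivity)).sub intervalIntegrable_const
  have hL1 : Tendsto (fun ε => ∫ s in 0..T, |meps ε s - m s|) (𝓝[>] 0) (𝓝 0) := by
    simp only [hmeps, hmtil]
    refine tendsto_intervalIntegral_abs_recentered_sub hT.le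
      (eventually_mem_nhdsWithin.mono fun ε (hε : 0 < ε) => hmInt.max_neg_min (by positivity))
      hmInt hint ?_
    simp only [intervalIntegral.integral_of_le hT.le]
    exact (tendsto_integral_abs_max_neg_min_sub hmInt.1).comp
      (tendsto_one_div_const_mul_nhdsGT_zero three_pos)
  have hdisp_le : ∀ ε > (0:ℝ), ∀ t ∈ Icc (0:ℝ) T,
      |τinv ε t - t| ≤ ε * ∫ s in (0:ℝ)..T, |meps ε s| := fun ε hε _ ht =>
    abs_sub_le_mul_intervalIntegral_abs_of_rightInvOn hε.le (hmepsInt ε hε) (hτ ε)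
      (hτinv ε hε).1.2 (hτinv ε hε).2 ht
  refine ⟨hdisp_le, fun t ht => ?_⟩
  have hmepsEv : ∀ᶠ ε in 𝓝[>] 0, IntervalIntegrable (meps ε) volume 0 T :=
    eventually_mem_nhdsWithin.mono hmepsInt
  have hσ : Tendsto (fun ε => τinv ε t) (𝓝[>] 0) (𝓝 t) := by
    have hbound := (tendsto_nhdsWithin_of_tendsto_nhds tendsto_id).mul
      (tendsto_intervalIntegral_abs_of_tendsto_abs_sub hT.le hmepsEv hmInt hL1)
    rw [zero_mul] at hbound
    refine tendsto_sub_nhds_zero_iff.1 (squeeze_zero_norm' ?_ hbound)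
    filter_upwards [self_mem_nhdsWithin] with ε hε using hdisp_le ε hε t ht
  refine ((tendsto_intervalIntegral_upper_of_tendsto_abs_sub ht hmepsEv hmInt hL1 hσ
    ?_).neg).congr' ?_
  · filter_upwards [self_mem_nhdsWithin] with ε hε using (hτinv ε hε).2 ht
  · filter_upwards [self_mem_nhdsWithin] with ε (hε : 0 < ε)
    rw [sub_eq_neg_mul_intervalIntegral_of_rightInvOn (hmepsInt ε hε) (hτ ε) (hτinv ε hε).1.2
      (hτinv ε hε).2 ht]
    field_simp
end

section
/- Let T > 0, n ≥ 1, and let 0 = t₀ ≤ t₁ ≤ ⋯ ≤ tₙ ≤ t_{n+1} = T. Then for every c ∈ ℝⁿ, T · Σ_{i,j=1}^{n} (min(t_i,t_j) − t_i t_j / T) c_i c_j = Σ_{1 ≤ k ≤ ℓ ≤ n} (t_k − t_{k−1})(t_{ℓ+1} − t_ℓ) (Σ_{i=k}^{ℓ} c_i)². -/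
/-!
Write `F k = t (k + 1) - t k` and `S k = ∑_{k < i ≤ n} c i`. Since `t i = ∑_{k < i} F k` and,
`t` being monotone, `min (t i) (t j) = t (min i j) = ∑_{k < min i j} F k`, the two forms become
`∑ t_i c_i = ∑_{k ≤ n} F k S k` and `∑ min (t_i, t_j) c_i c_j = ∑_{k ≤ n} F k (S k)²`, while
`T = ∑_{k ≤ n} F k`. The claim is then Lagrange's identity
`(∑ F)(∑ F S²) - (∑ F S)² = ∑_{l < k} F l F k (S l - S k)²`, since `S (k - 1) - S l = ∑_{i=k}^{l} c i`.
-/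

open Finset

theorem sum_mul_sum_mul_sq_sub_sq {R : Type*} [CommRing R] (f g : ℕ → R) (N : ℕ) :
    (∑ k ∈ range N, f k) * (∑ k ∈ range N, f k * g k ^ 2) - (∑ k ∈ range N, f k * g k) ^ 2
      = ∑ k ∈ range N, ∑ l ∈ range k, f l * f k * (g l - g k) ^ 2 := by
  induction N with
  | zero => simp
  | succ N ih =>
    have hnew : ∑ l ∈ range N, f l * f N * (g l - g N) ^ 2
        = g N ^ 2 * (f N * ∑ k ∈ range N, f k) + f N * ∑ k ∈ range N, f k * g k ^ 2
          - 2 * g N * (f N * ∑ k ∈ range N, f k * g k) := by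
      simp only [mul_sum, ← sum_add_distrib, ← sum_sub_distrib]
      exact sum_congr rfl fun l _ => by ring
    simp only [sum_range_succ, hnew, ← ih]
    ring

theorem sum_sum_sum_mul_mul_mul_mul_eq_sum_mul_sq {ι κ R : Type*} [CommSemiring R] (s : Finset ι)
    (r : Finset κ) (w : κ → R) (a : κ → ι → R) (c : ι → R) :
    ∑ i ∈ s, ∑ j ∈ s, (∑ k ∈ r, w k * a k i * a k j) * c i * c j
      = ∑ k ∈ r, w k * (∑ i ∈ s, a k i * c i) ^ 2 := by
  simp only [sq, mul_sum, sum_mul]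
  conv_lhs => enter [2, i]; rw [sum_comm]
  rw [sum_comm]
  exact sum_congr rfl fun k _ => sum_congr rfl fun i _ => sum_congr rfl fun j _ => by ring

theorem mul_sum_sum_sub_mul_div_mul_mul {ι K : Type*} [Field K] (s : Finset ι) {T : K}
    (hT : T ≠ 0) (m : ι → ι → K) (x c : ι → K) :
    T * ∑ i ∈ s, ∑ j ∈ s, (m i j - x i * x j / T) * c i * c j
      = T * ∑ i ∈ s, ∑ j ∈ s, m i j * c i * c j - (∑ i ∈ s, x i * c i) ^ 2 := by
  rw [sq, sum_mul_sum]
  simp only [mul_sum, ← sum_sub_distrib]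
  exact sum_congr rfl fun i _ => sum_congr rfl fun j _ => by field_simp

theorem sum_range_sum_range_eq_sum_Icc_sum_Icc {M : Type*} [AddCommMonoid M] (G : ℕ → ℕ → M)
    (n : ℕ) :
    ∑ k ∈ range (n + 1), ∑ l ∈ range k, G l k = ∑ k ∈ Icc 1 n, ∑ l ∈ Icc k n, G (k - 1) l := by
  calc ∑ k ∈ range (n + 1), ∑ l ∈ range k, G l k
      = ∑ k ∈ range (n + 1), ∑ l ∈ Icc 1 k, G (l - 1) k := by
        refine sum_congr rfl fun k _ => sum_nbij' (· + 1) (· - 1) ?_ ?_ ?_ ?_ ?_ <;>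
          intro l hl <;> simp at hl ⊢ <;> omega
    _ = ∑ k ∈ Icc 1 n, ∑ l ∈ Icc k n, G (k - 1) l :=
        sum_comm' fun _ _ => by simp only [mem_range, mem_Icc]; omega

theorem sum_Icc_indicator_mul {R : Type*} [NonAssocSemiring R] (c : ℕ → R) (n k : ℕ) :
    ∑ i ∈ Icc 1 n, (if k < i then 1 else 0) * c i = ∑ i ∈ Ioc k n, c i := by
  have hfilter : {i ∈ Icc 1 n | k < i} = Ioc k n := by ext; simp; omega
  simp only [boole_mul, ← sum_filter, hfilter]

theorem sum_Icc_eq_sum_Ioc_sub_sum_Ioc {M : Type*} [AddCommGroup M] (c : ℕ → M) {n k l : ℕ}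
    (hk : 1 ≤ k) (hkl : k ≤ l) (hl : l ≤ n) :
    ∑ i ∈ Icc k l, c i = ∑ i ∈ Ioc (k - 1) n, c i - ∑ i ∈ Ioc l n, c i := by
  have hIcc : Icc k l = Ioc (k - 1) l := by ext; simp; omega
  rw [eq_sub_iff_add_eq, hIcc, sum_Ioc_consecutive c (by omega) hl]

section Increments

variable {R : Type*} [CommRing R] {t : ℕ → R}

theorem eq_sum_range_sub_mul_indicator (h0 : t 0 = 0) {N i : ℕ} (hi : i ≤ N) :
    t i = ∑ k ∈ range N, (t (k + 1) - t k) * if k < i then 1 else 0 := by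
  have hfilter : {k ∈ range N | k < i} = range i := by ext; simp; omega
  simp only [mul_ite, mul_one, mul_zero, ← sum_filter, hfilter, sum_range_sub, h0, sub_zero]

theorem sum_Icc_mul_eq_sum_range_sub_mul_sum_Ioc (h0 : t 0 = 0) (c : ℕ → R) (n : ℕ) :
    ∑ i ∈ Icc 1 n, t i * c i = ∑ k ∈ range (n + 1), (t (k + 1) - t k) * ∑ i ∈ Ioc k n, c i := by
  calc ∑ i ∈ Icc 1 n, t i * c i
      = ∑ i ∈ Icc 1 n, ∑ k ∈ range (n + 1),
          (t (k + 1) - t k) * ((if k < i then 1 else 0) * c i) := by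
        refine sum_congr rfl fun i hi => ?_
        rw [eq_sum_range_sub_mul_indicator h0 (by grind : i ≤ n + 1), sum_mul]
        simp only [mul_assoc]
    _ = _ := by
        rw [sum_comm]
        simp only [← mul_sum, sum_Icc_indicator_mul]

end Increments

theorem sum_Icc_sum_Icc_min_mul_mul {R : Type*} [CommRing R] [LinearOrder R] {t : ℕ → R} {n : ℕ}
    (h0 : t 0 = 0) (hmono : MonotoneOn t (Set.Iic (n + 1))) (c : ℕ → R) :
    ∑ i ∈ Icc 1 n, ∑ j ∈ Icc 1 n, min (t i) (t j) * c i * c j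
      = ∑ k ∈ range (n + 1), (t (k + 1) - t k) * (∑ i ∈ Ioc k n, c i) ^ 2 := by
  have hmin : ∀ i ∈ Icc 1 n, ∀ j ∈ Icc 1 n, min (t i) (t j) = ∑ k ∈ range (n + 1),
      (t (k + 1) - t k) * (if k < i then 1 else 0) * (if k < j then 1 else 0) := by
    intro i hi j hj
    have hi' : i ≤ n + 1 := by grind
    have hj' : j ≤ n + 1 := by grind
    rw [← hmono.map_min hi' hj', eq_sum_range_sub_mul_indicator h0 (min_le_of_left_le hi')]
    simp only [mul_assoc, ite_zero_mul_ite_zero, mul_one, lt_min_iff]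
  simp_rw [← sum_Icc_indicator_mul, ← sum_sum_sum_mul_mul_mul_mul_eq_sum_mul_sq]
  exact sum_congr rfl fun i hi => sum_congr rfl fun j hj => by rw [hmin i hi j hj]

theorem bridge_kernel_decomposition_general
    (T : ℝ) (hT : 0 < T) (n : ℕ)
    (t : ℕ → ℝ) (h0 : t 0 = 0) (hlast : t (n + 1) = T)
    (hmono : ∀ k ≤ n, t k ≤ t (k + 1)) (c : ℕ → ℝ) :
    T * ∑ i ∈ Finset.Icc 1 n, ∑ j ∈ Finset.Icc 1 n,
        (min (t i) (t j) - t i * t j / T) * c i * c j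
      = ∑ k ∈ Finset.Icc 1 n, ∑ l ∈ Finset.Icc k n,
          (t k - t (k - 1)) * (t (l + 1) - t l) * (∑ i ∈ Finset.Icc k l, c i) ^ 2 := by
  have hmon : MonotoneOn t (Set.Iic (n + 1)) :=
    monotoneOn_of_le_add_one Set.ordConnected_Iic fun k _ _ hk => hmono k (by simpa using hk)
  have hT_eq : ∑ k ∈ range (n + 1), (t (k + 1) - t k) = T := by
    rw [sum_range_sub, h0, hlast, sub_zero]
  rw [mul_sum_sum_sub_mul_div_mul_mul _ hT.ne', sum_Icc_sum_Icc_min_mul_mul h0 hmon,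
    sum_Icc_mul_eq_sum_range_sub_mul_sum_Ioc h0, ← hT_eq, sum_mul_sum_mul_sq_sub_sq,
    sum_range_sum_range_eq_sum_Icc_sum_Icc]
  refine sum_congr rfl fun k hk => sum_congr rfl fun l hl => ?_
  simp only [mem_Icc] at hk hl
  rw [Nat.sub_add_cancel hk.1, sum_Icc_eq_sum_Ioc_sub_sum_Ioc c hk.1 hl.1 hl.2]

/-- Exact quadratic-form decomposition for the Brownian-bridge kernel
`ξ_{ij} = min(t_i,t_j) − t_i t_j / T` with `t₀ = 0` and `t_{n+1} = T`:
`T·Σ_{i,j=1}^n ξ_{ij} c_i c_j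
  = Σ_{1 ≤ k ≤ ℓ ≤ n} (t_k − t_{k−1})(t_{ℓ+1} − t_ℓ)(Σ_{i=k}^ℓ c_i)²`. -/
theorem bridge_kernel_decomposition
    (T : ℝ) (hT : 0 < T) (n : ℕ) (hn : 1 ≤ n)
    (t : ℕ → ℝ) (h0 : t 0 = 0) (hlast : t (n + 1) = T)
    (hmono : ∀ k ≤ n, t k ≤ t (k + 1)) (c : ℕ → ℝ) :
    T * ∑ i ∈ Finset.Icc 1 n, ∑ j ∈ Finset.Icc 1 n,
        (min (t i) (t j) - t i * t j / T) * c i * c j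
      = ∑ k ∈ Finset.Icc 1 n, ∑ l ∈ Finset.Icc k n,
          (t k - t (k - 1)) * (t (l + 1) - t l) * (∑ i ∈ Finset.Icc k l, c i) ^ 2 :=
  bridge_kernel_decomposition_general T hT n t h0 hlast hmono c
end

section
/- Let T > 0, n ≥ 1, and let 0 = t₀ < t₁ < ⋯ < tₙ < T = t_{n+1}. Then for every c ∈ ℝⁿ, Σ_{i,j=1}^{n} (min(t_i,t_j) − t_i t_j / T) c_i c_j ≥ (1/T) Σ_{k=1}^{n} (t_k − t_{k−1})(t_{k+1} − t_k) c_k². In particular, the n×n symmetric matrix with entries min(t_i,t_j) − t_i t_j / T is positive definite. -/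
/-!
Write `d k = t k - t (k - 1)` for the gaps and `A k = ∑_{k ≤ i ≤ n} c i` for the tail sums of `c`,
so that `A (n + 1) = 0` and `A k - A (k + 1) = c k`. Summing by parts,
`∑ min (t i) (t j) c_i c_j = ∑ d_k A_k²` and `∑ t_i c_i = ∑ d_k A_k`, hence `T` times the quadratic form
is the weighted variance `(∑ d)(∑ d A²) - (∑ d A)²` of the tail sums over the `n + 1` gaps.
By Lagrange's identity this is `½ ∑_{k,l} d_k d_l (A_k - A_l)²`, and keeping only the adjacent pairs
`l = k ± 1` leaves `∑ d_k d_{k+1} c_k²`.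
-/

open Finset

theorem two_mul_sum_mul_sum_mul_sq_sub_sq {ι R : Type*} [CommRing R] (s : Finset ι)
    (w x : ι → R) :
    2 * ((∑ i ∈ s, w i) * ∑ i ∈ s, w i * x i ^ 2 - (∑ i ∈ s, w i * x i) ^ 2) =
      ∑ i ∈ s, ∑ j ∈ s, w i * w j * (x i - x j) ^ 2 := by
  have inner (i : ι) : ∑ j ∈ s, w i * w j * (x i - x j) ^ 2 =
      w i * x i ^ 2 * ∑ j ∈ s, w j + w i * ∑ j ∈ s, w j * x j ^ 2 -
        2 * (w i * x i) * ∑ j ∈ s, w j * x j := by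
    rw [mul_sum, mul_sum, mul_sum, ← sum_add_distrib, ← sum_sub_distrib]
    exact sum_congr rfl fun j _ => by ring
  rw [sum_congr rfl fun i _ => inner i, sum_sub_distrib, sum_add_distrib, ← sum_mul, ← sum_mul,
    ← sum_mul, ← mul_sum]
  ring

theorem sum_Icc_adjacent_le_sum_sum {M : Type*} [AddCommMonoid M] [PartialOrder M]
    [IsOrderedAddMonoid M] (F : ℕ → ℕ → M) (m : ℕ)
    (hF : ∀ i ∈ Icc 1 (m + 1), ∀ j ∈ Icc 1 (m + 1), 0 ≤ F i j) :
    ∑ k ∈ Icc 1 m, (F k (k + 1) + F (k + 1) k) ≤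
      ∑ i ∈ Icc 1 (m + 1), ∑ j ∈ Icc 1 (m + 1), F i j := by
  induction m with
  | zero => simpa using hF 1 (by simp) 1 (by simp)
  | succ m ih =>
    have top (f : ℕ → M) : ∑ k ∈ Icc 1 (m + 2), f k = ∑ k ∈ Icc 1 (m + 1), f k + f (m + 2) :=
      sum_Icc_succ_top (by omega) f
    have mem : ∀ i ∈ Icc 1 (m + 1), i ∈ Icc 1 (m + 2) := fun i hi => by
      simp only [mem_Icc] at hi ⊢; omega
    have last : m + 2 ∈ Icc 1 (m + 2) := by simp
    have column : F (m + 1) (m + 2) ≤ ∑ i ∈ Icc 1 (m + 1), F i (m + 2) :=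
      single_le_sum (fun i hi => hF i (mem i hi) _ last) (by simp)
    have row : F (m + 2) (m + 1) ≤ ∑ j ∈ Icc 1 (m + 1), F (m + 2) j :=
      single_le_sum (fun j hj => hF _ last j (mem j hj)) (by simp)
    calc ∑ k ∈ Icc 1 (m + 1), (F k (k + 1) + F (k + 1) k)
        = ∑ k ∈ Icc 1 m, (F k (k + 1) + F (k + 1) k) + (F (m + 1) (m + 2) + F (m + 2) (m + 1)) :=
          sum_Icc_succ_top (by omega) _
      _ ≤ ∑ i ∈ Icc 1 (m + 1), ∑ j ∈ Icc 1 (m + 1), F i j +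
            (∑ i ∈ Icc 1 (m + 1), F i (m + 2) + ∑ j ∈ Icc 1 (m + 1), F (m + 2) j) :=
          add_le_add (ih fun i hi j hj => hF i (mem i hi) j (mem j hj)) (add_le_add column row)
      _ ≤ ∑ i ∈ Icc 1 (m + 1), ∑ j ∈ Icc 1 (m + 1), F i j +
            (∑ i ∈ Icc 1 (m + 1), F i (m + 2) + ∑ j ∈ Icc 1 (m + 1), F (m + 2) j) +
              F (m + 2) (m + 2) :=
          le_add_of_nonneg_right (hF _ last _ last)
      _ = ∑ i ∈ Icc 1 (m + 2), ∑ j ∈ Icc 1 (m + 2), F i j := by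
          simp only [top, sum_add_distrib]
          abel

section SummationByParts

variable {R : Type*} [CommSemiring R] (d c : ℕ → R) (n : ℕ)

theorem sum_prefixSum_mul_eq_sum_mul_tailSum :
    ∑ i ∈ Icc 1 n, (∑ k ∈ Icc 1 i, d k) * c i = ∑ k ∈ Icc 1 n, d k * ∑ i ∈ Icc k n, c i := by
  simp_rw [sum_mul, mul_sum]
  exact sum_comm' fun i k => by simp only [mem_Icc]; omega

theorem sum_sum_prefixSum_min_mul_mul_eq_sum_mul_tailSum_sq :
    ∑ i ∈ Icc 1 n, ∑ j ∈ Icc 1 n, (∑ k ∈ Icc 1 (min i j), d k) * c i * c j =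
      ∑ k ∈ Icc 1 n, d k * (∑ i ∈ Icc k n, c i) ^ 2 := by
  calc _ = ∑ i ∈ Icc 1 n, ∑ k ∈ Icc 1 i, ∑ j ∈ Icc k n, d k * c i * c j := by
        refine sum_congr rfl fun i hi => ?_
        simp_rw [sum_mul]
        exact sum_comm' fun j k => by simp only [mem_Icc] at hi ⊢; omega
    _ = ∑ k ∈ Icc 1 n, ∑ i ∈ Icc k n, ∑ j ∈ Icc k n, d k * c i * c j :=
        sum_comm' fun i k => by simp only [mem_Icc]; omega
    _ = _ := by simp_rw [sq, sum_mul_sum, mul_sum, mul_assoc]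

end SummationByParts

theorem sum_Icc_sub_pred {G : Type*} [AddCommGroup G] (t : ℕ → G) (m : ℕ) :
    ∑ k ∈ Icc 1 m, (t k - t (k - 1)) = t m - t 0 := by
  induction m with
  | zero => simp
  | succ m ih => rw [sum_Icc_succ_top (by omega), ih, Nat.add_sub_cancel]; abel

theorem min_sum_Icc_eq_sum_Icc_min {M : Type*} [AddCommMonoid M] [LinearOrder M]
    [IsOrderedAddMonoid M] (d : ℕ → M) {m i j : ℕ} (hd : ∀ k ∈ Icc 1 m, 0 ≤ d k) (hi : i ≤ m)
    (hj : j ≤ m) :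
    min (∑ k ∈ Icc 1 i, d k) (∑ k ∈ Icc 1 j, d k) = ∑ k ∈ Icc 1 (min i j), d k := by
  have mono {a b : ℕ} (hab : a ≤ b) (hb : b ≤ m) : ∑ k ∈ Icc 1 a, d k ≤ ∑ k ∈ Icc 1 b, d k :=
    sum_le_sum_of_subset_of_nonneg (Icc_subset_Icc le_rfl hab)
      fun k hk _ => hd k (Icc_subset_Icc le_rfl hb hk)
  rcases le_total i j with h | h
  · rw [min_eq_left h, min_eq_left (mono h hj)]
  · rw [min_eq_right h, min_eq_right (mono h hi)]

theorem sum_Icc_one_eq_sum_fin {M : Type*} [AddCommMonoid M] (f : ℕ → M) (n : ℕ) :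
    ∑ k ∈ Icc 1 n, f k = ∑ i : Fin n, f (i + 1) := by
  rw [Fin.sum_univ_eq_sum_range (fun i => f (i + 1)), range_eq_Ico, sum_Ico_add' f,
    ← Ico_add_one_right_eq_Icc]

theorem sum_adjacent_mul_sq_le_variance_tailSum {R : Type*} [CommRing R] [LinearOrder R]
    [IsStrictOrderedRing R] (d c : ℕ → R) (n : ℕ) (hd : ∀ k ∈ Icc 1 (n + 1), 0 ≤ d k) :
    ∑ k ∈ Icc 1 n, d k * d (k + 1) * c k ^ 2 ≤
      (∑ k ∈ Icc 1 (n + 1), d k) * ∑ k ∈ Icc 1 n, d k * (∑ i ∈ Icc k n, c i) ^ 2 -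
        (∑ k ∈ Icc 1 n, d k * ∑ i ∈ Icc k n, c i) ^ 2 := by
  set A : ℕ → R := fun k => ∑ i ∈ Icc k n, c i
  have extend (f : ℕ → R) (hf : f (n + 1) = 0) :
      ∑ k ∈ Icc 1 n, d k * f k = ∑ k ∈ Icc 1 (n + 1), d k * f k := by
    rw [sum_Icc_succ_top (by omega), hf, mul_zero, add_zero]
  have hA_last : A (n + 1) = 0 := by simp [A]
  have hA_step : ∀ k ∈ Icc 1 n, A k - A (k + 1) = c k := fun k hk => by
    simp only [A, ← add_sum_Ioc_eq_sum_Icc (mem_Icc.mp hk).2, Icc_add_one_left_eq_Ioc]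
    abel
  rw [extend A hA_last, extend (A · ^ 2) (by simp [hA_last])]
  refine le_of_mul_le_mul_left ?_ (two_pos (α := R))
  rw [two_mul_sum_mul_sum_mul_sq_sub_sq]
  refine le_of_eq_of_le ?_ (sum_Icc_adjacent_le_sum_sum (fun i j => d i * d j * (A i - A j) ^ 2) n
    fun i hi j hj => mul_nonneg (mul_nonneg (hd i hi) (hd j hj)) (sq_nonneg _))
  rw [mul_sum]
  refine sum_congr rfl fun k hk => ?_
  rw [← hA_step k hk]
  ring

theorem bridgeKernel_quadraticForm_lower_bound (T : ℝ) (hT : 0 < T) (n : ℕ) (t : ℕ → ℝ)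
    (h0 : t 0 = 0) (hlast : t (n + 1) = T) (hmono : ∀ k ≤ n, t k ≤ t (k + 1)) (c : ℕ → ℝ) :
    (1 / T) * ∑ k ∈ Icc 1 n, (t k - t (k - 1)) * (t (k + 1) - t k) * c k ^ 2 ≤
      ∑ i ∈ Icc 1 n, ∑ j ∈ Icc 1 n, (min (t i) (t j) - t i * t j / T) * c i * c j := by
  set d : ℕ → ℝ := fun k => t k - t (k - 1) with hd_def
  have ht (m : ℕ) : t m = ∑ k ∈ Icc 1 m, d k := by rw [sum_Icc_sub_pred, h0, sub_zero]
  have hd : ∀ k ∈ Icc 1 (n + 1), 0 ≤ d k := fun k hk => by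
    have := hmono (k - 1) (by simp only [mem_Icc] at hk; omega)
    rw [Nat.sub_add_cancel (mem_Icc.mp hk).1] at this
    exact sub_nonneg.mpr this
  have hmin : ∀ i ∈ Icc 1 n, ∀ j ∈ Icc 1 n, min (t i) (t j) = t (min i j) := fun i hi j hj => by
    simp only [mem_Icc] at hi hj
    rw [ht i, ht j, ht (min i j)]
    exact min_sum_Icc_eq_sum_Icc_min d hd (by omega) (by omega)
  have form : ∑ i ∈ Icc 1 n, ∑ j ∈ Icc 1 n, (min (t i) (t j) - t i * t j / T) * c i * c j =
      ∑ i ∈ Icc 1 n, ∑ j ∈ Icc 1 n, (∑ k ∈ Icc 1 (min i j), d k) * c i * c j -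
        (∑ i ∈ Icc 1 n, (∑ k ∈ Icc 1 i, d k) * c i) ^ 2 / T := by
    rw [sq, sum_mul_sum, sum_div, ← sum_sub_distrib]
    refine sum_congr rfl fun i hi => ?_
    rw [sum_div, ← sum_sub_distrib]
    refine sum_congr rfl fun j hj => ?_
    rw [hmin i hi j hj, ← ht, ← ht, ← ht]
    ring
  have gaps : ∀ k ∈ Icc 1 n, (t k - t (k - 1)) * (t (k + 1) - t k) = d k * d (k + 1) :=
    fun k _ => by simp only [hd_def, Nat.add_sub_cancel]
  have variance := sum_adjacent_mul_sq_le_variance_tailSum d c n hd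
  rw [← ht, hlast] at variance
  rw [form, sum_sum_prefixSum_min_mul_mul_eq_sum_mul_tailSum_sq,
    sum_prefixSum_mul_eq_sum_mul_tailSum, sum_congr rfl fun k hk => by rw [gaps k hk],
    one_div_mul_eq_div, div_le_iff₀ hT, sub_mul, div_mul_cancel₀ _ hT.ne']
  linarith

theorem Matrix.posDef_of_sum_mul_sq_le {ι R : Type*} [Fintype ι] [CommRing R] [LinearOrder R]
    [IsStrictOrderedRing R] [StarRing R] [TrivialStar R] {M : Matrix ι ι R} (hM : M.IsHermitian)
    (w : ι → R) (hw : ∀ i, 0 < w i) (h : ∀ x : ι → R, ∑ i, w i * x i ^ 2 ≤ x ⬝ᵥ M.mulVec x) :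
    M.PosDef := by
  refine Matrix.posDef_iff_dotProduct_mulVec.mpr ⟨hM, fun x hx => ?_⟩
  obtain ⟨i, hi⟩ := Function.ne_iff.mp hx
  rw [star_trivial]
  refine lt_of_lt_of_le (sum_pos' (fun j _ => ?_) ⟨i, mem_univ i, ?_⟩) (h x)
  · exact mul_nonneg (hw j).le (sq_nonneg _)
  · exact mul_pos (hw i) (pow_two_pos_of_ne_zero hi)

theorem bridgeKernel_posDef (T : ℝ) (hT : 0 < T) (n : ℕ) (t : ℕ → ℝ) (h0 : t 0 = 0)
    (hlast : t (n + 1) = T) (hmono : ∀ k ≤ n, t k < t (k + 1)) :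
    Matrix.PosDef (Matrix.of fun i j : Fin n =>
      min (t (i.val + 1)) (t (j.val + 1)) - t (i.val + 1) * t (j.val + 1) / T) := by
  refine Matrix.posDef_of_sum_mul_sq_le ?_
    (fun i => 1 / T * ((t (i + 1) - t i) * (t (i + 1 + 1) - t (i + 1)))) (fun i => ?_)
    fun x => ?_
  · ext i j
    simp [min_comm, mul_comm]
  · have := hmono i i.isLt.le
    have := hmono (i + 1) i.isLt
    have : 0 < t (i + 1 + 1) - t (i + 1) := by linarith
    have : 0 < t (i + 1) - t i := by linarith
    positivity
  · let c : ℕ → ℝ := Function.extend (fun i : Fin n => (i : ℕ) + 1) x 0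
    have hc (i : Fin n) : c (i + 1) = x i :=
      ((add_left_injective 1).comp Fin.val_injective).extend_apply x 0 i
    have bound := bridgeKernel_quadraticForm_lower_bound T hT n t h0 hlast
      (fun k hk => (hmono k hk).le) c
    simp only [sum_Icc_one_eq_sum_fin, hc, Nat.add_sub_cancel, mul_sum] at bound
    refine (Eq.trans_le ?_ bound).trans_eq ?_
    · exact sum_congr rfl fun i _ => by ring
    · simp only [dotProduct, Matrix.mulVec, Matrix.of_apply, mul_sum]
      exact sum_congr rfl fun i _ => sum_congr rfl fun j _ => by ring

theorem bridge_kernel_posdef_general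
    (T : ℝ) (hT : 0 < T) (n : ℕ)
    (t : ℕ → ℝ) (h0 : t 0 = 0) (hlast : t (n + 1) = T)
    (hmono : ∀ k ≤ n, t k < t (k + 1)) :
    (∀ c : ℕ → ℝ,
      (1 / T) * ∑ k ∈ Finset.Icc 1 n,
          (t k - t (k - 1)) * (t (k + 1) - t k) * c k ^ 2
        ≤ ∑ i ∈ Finset.Icc 1 n, ∑ j ∈ Finset.Icc 1 n,
            (min (t i) (t j) - t i * t j / T) * c i * c j) ∧
    Matrix.PosDef (Matrix.of fun i j : Fin n =>
      min (t (i.val + 1)) (t (j.val + 1)) - t (i.val + 1) * t (j.val + 1) / T) :=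
  ⟨bridgeKernel_quadraticForm_lower_bound T hT n t h0 hlast fun k hk => (hmono k hk).le,
    bridgeKernel_posDef T hT n t h0 hlast hmono⟩

/-- Ellipticity of the Brownian-bridge kernel `ξ_{ij} = min(t_i,t_j) − t_i t_j / T` on
`0 = t₀ < t₁ < ⋯ < tₙ < t_{n+1} = T`:
`Σ_{i,j} ξ_{ij} c_i c_j ≥ (1/T) Σ_k (t_k − t_{k−1})(t_{k+1} − t_k) c_k²`, and the matrix
`(ξ_{ij})` is positive definite. -/
theorem bridge_kernel_posdef
    (T : ℝ) (hT : 0 < T) (n : ℕ) (hn : 1 ≤ n)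
    (t : ℕ → ℝ) (h0 : t 0 = 0) (hlast : t (n + 1) = T)
    (hmono : ∀ k ≤ n, t k < t (k + 1)) :
    (∀ c : ℕ → ℝ,
      (1 / T) * ∑ k ∈ Finset.Icc 1 n,
          (t k - t (k - 1)) * (t (k + 1) - t k) * c k ^ 2
        ≤ ∑ i ∈ Finset.Icc 1 n, ∑ j ∈ Finset.Icc 1 n,
            (min (t i) (t j) - t i * t j / T) * c i * c j) ∧
    Matrix.PosDef (Matrix.of fun i j : Fin n =>
      min (t (i.val + 1)) (t (j.val + 1)) - t (i.val + 1) * t (j.val + 1) / T) :=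
  bridge_kernel_posdef_general T hT n t h0 hlast hmono
end

section
/- Let T > 0, n ≥ 1, 0 < t₁ < ⋯ < tₙ < T, and a₁, …, aₙ ∈ ℝ. If Σ_{i=1}^{n} a_i (t_i/T − 1_{[0,t_i]}(s)) = 0 for Lebesgue-almost every s ∈ [0,T], then a_i = 0 for every i ∈ {1,…,n}. -/
open MeasureTheory Set

/-! The combination is a step function that jumps by `a k` at `t k` and is constant between
consecutive jump times. Around `t k` there is an interval containing no other jump time; the
combination vanishes at some point of each half of it, since both halves have positive measure,
and the difference of those two values is `a k`. -/

theorem exists_Ioo_subset_Ioo_diff_image_compl {ι : Type*} [Finite ι] {t : ι → ℝ}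
    (ht : Function.Injective t) {a b : ℝ} {k : ι} (hk : t k ∈ Ioo a b) :
    ∃ δ > 0, Ioo (t k - δ) (t k + δ) ⊆ Ioo a b \ t '' {k}ᶜ := by
  have hopen : IsOpen (Ioo a b \ t '' {k}ᶜ) := isOpen_Ioo.sdiff (toFinite _).isClosed
  have hmem : t k ∈ Ioo a b \ t '' {k}ᶜ := ⟨hk, fun ⟨j, hj, hjk⟩ => hj (ht hjk)⟩
  obtain ⟨δ, hδ, hball⟩ := Metric.isOpen_iff.1 hopen _ hmem
  exact ⟨δ, hδ, Real.ball_eq_Ioo (t k) δ ▸ hball⟩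

theorem indicator_Icc_zero_eq_of_notMem_Ico {c s s' : ℝ} (hs : 0 ≤ s) (hss' : s ≤ s')
    (hc : c ∉ Ico s s') :
    indicator (Icc 0 c) (fun _ => (1 : ℝ)) s = indicator (Icc 0 c) (fun _ => (1 : ℝ)) s' := by
  have : s ≤ c ↔ s' ≤ c := ⟨fun hsc => not_lt.1 fun hcs => hc ⟨hsc, hcs⟩, hss'.trans⟩
  simp [indicator_apply, hs, hs.trans hss', this]

theorem sum_mul_sub_indicator_Icc_sub_eq {ι : Type*} [Fintype ι] (a c t : ι → ℝ) {k : ι}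
    {s s' : ℝ} (hs : 0 ≤ s) (hsk : s ≤ t k) (hks' : t k < s')
    (hiso : ∀ j ≠ k, t j ∉ Ico s s') :
    (∑ i, a i * (c i - indicator (Icc 0 (t i)) (fun _ => (1 : ℝ)) s')) -
      ∑ i, a i * (c i - indicator (Icc 0 (t i)) (fun _ => (1 : ℝ)) s) = a k := by
  rw [← Finset.sum_sub_distrib, Finset.sum_eq_single k]
  · have hs' : s' ∉ Icc 0 (t k) := fun h => (h.2.trans_lt hks').false
    simp [hs', hs, hsk]
    ring
  · intro j _ hjk
    rw [indicator_Icc_zero_eq_of_notMem_Ico hs (hsk.trans hks'.le) (hiso j hjk), sub_self]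
  · simp

theorem linear_independence_bridge_general
    (T : ℝ) (n : ℕ)
    (t : Fin n → ℝ) (hmono : StrictMono t) (hrange : ∀ i, t i ∈ Ioo (0:ℝ) T)
    (a : Fin n → ℝ)
    (h : ∀ᵐ s ∂(volume.restrict (Icc (0:ℝ) T)),
      ∑ i, a i * (t i / T - indicator (Icc (0:ℝ) (t i)) (fun _ => (1:ℝ)) s) = 0) :
    ∀ i, a i = 0 := by
  intro k
  obtain ⟨δ, hδ, hsub⟩ := exists_Ioo_subset_Ioo_diff_image_compl hmono.injective (hrange k)
  have hIcc : Ioo (t k - δ) (t k + δ) ⊆ Icc 0 T := fun x hx => Ioo_subset_Icc_self (hsub hx).1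
  have hvanish {U : Set ℝ} (hU : U ⊆ Ioo (t k - δ) (t k + δ)) (hU₀ : volume U ≠ 0) :=
    Measure.exists_mem_of_measure_ne_zero_of_ae hU₀
      (ae_restrict_of_ae_restrict_of_subset (hU.trans hIcc) h)
  obtain ⟨s, hs, hzero⟩ :=
    hvanish (Ioo_subset_Ioo_right (by linarith : t k ≤ t k + δ)) (by simpa using hδ)
  obtain ⟨s', hs', hzero'⟩ :=
    hvanish (Ioo_subset_Ioo_left (by linarith : t k - δ ≤ t k)) (by simpa using hδ)
  have hiso : ∀ j ≠ k, t j ∉ Ico s s' := fun j hj hmem =>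
    (hsub ⟨hs.1.trans_le hmem.1, hmem.2.trans hs'.2⟩).2 ⟨j, hj, rfl⟩
  have hjump := sum_mul_sub_indicator_Icc_sub_eq a (fun i => t i / T) t
    (hIcc ⟨hs.1, hs.2.trans (by linarith)⟩).1 hs.2.le hs'.1 hiso
  rw [hzero, hzero', sub_zero] at hjump
  exact hjump.symm

/-- The functions `s ↦ t_i/T − 1_{[0,t_i]}(s)`, for `0 < t₁ < ⋯ < tₙ < T`, are linearly
independent in `L²([0,T])`: if a linear combination vanishes a.e. on `[0,T]`, then all
coefficients vanish. -/
theorem linear_independence_bridge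
    (T : ℝ) (hT : 0 < T) (n : ℕ) (hn : 1 ≤ n)
    (t : Fin n → ℝ) (hmono : StrictMono t) (hrange : ∀ i, t i ∈ Ioo (0:ℝ) T)
    (a : Fin n → ℝ)
    (h : ∀ᵐ s ∂(volume.restrict (Icc (0:ℝ) T)),
      ∑ i, a i * (t i / T - indicator (Icc (0:ℝ) (t i)) (fun _ => (1:ℝ)) s) = 0) :
    ∀ i, a i = 0 :=
  linear_independence_bridge_general T n t hmono hrange a h
end

section
/- Let T > 0, α : [0,T] → ℝ be integrable, σ ∈ ℝ, x₀ ∈ ℝ, and 0 < t₁ < ⋯ < tₙ ≤ T. Let N_t = #{i : t_i ≤ t} and define S_t = x₀ · exp(∫₀ᵗ α(s) ds) · (1+σ)^{N_t} for t ∈ [0,T]. Then for every t ∈ [0,T]: S_t = x₀ + ∫₀ᵗ α(s) S_s ds + σ · Σ_{i : t_i ≤ t} x₀ · exp(∫₀^{t_i} α(s) ds) · (1+σ)^{i−1}, where x₀ · exp(∫₀^{t_i} α) · (1+σ)^{i−1} is the left limit S_{t_i−}. -/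
open MeasureTheory Set

/-!
Write `E t = exp (∫₀ᵗ α)`. Because the jump times are increasing, the jumps up to time `s` are
`t₁, …, t_{N_s}`, so `(1 + σ) ^ N_s = 1 + σ ∑_{t_i ≤ s} (1 + σ) ^ (i - 1)` and
`α S = x₀ α E (1 + ∑ᵢ σ (1 + σ) ^ (i - 1) 𝟙[t_i, ∞))`. Each term integrates by the fundamental
theorem of calculus for the absolutely continuous function `E`: `∫_{t_i}^r α E = E r - E t_i`.
The resulting sums recombine into `x₀ E r (1 + σ) ^ N_r`.
-/

theorem LipschitzOnWith.comp_absolutelyContinuousOnInterval {X Y : Type*} [PseudoMetricSpace X]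
    [PseudoMetricSpace Y] {g : X → Y} {f : ℝ → X} {K : NNReal} {a b : ℝ}
    (hg : LipschitzOnWith K g (f '' uIcc a b)) (hf : AbsolutelyContinuousOnInterval f a b) :
    AbsolutelyContinuousOnInterval (g ∘ f) a b := by
  have hKf := Filter.Tendsto.const_mul (K : ℝ) hf
  rw [mul_zero] at hKf
  refine squeeze_zero' (Filter.Eventually.of_forall fun _ ↦ Finset.sum_nonneg fun _ _ ↦
    dist_nonneg) ?_ hKf
  filter_upwards [Filter.mem_inf_of_right (Filter.mem_principal_self _)] with E hE
  rw [Finset.mul_sum]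
  exact Finset.sum_le_sum fun i hi ↦ hg.dist_le_mul _ (mem_image_of_mem f (hE.1 i hi).1) _
    (mem_image_of_mem f (hE.1 i hi).2)

theorem LocallyLipschitz.comp_absolutelyContinuousOnInterval {E Y : Type*}
    [SeminormedAddCommGroup E] [PseudoMetricSpace Y] {g : E → Y} {f : ℝ → E} {a b : ℝ}
    (hg : LocallyLipschitz g) (hf : AbsolutelyContinuousOnInterval f a b) :
    AbsolutelyContinuousOnInterval (g ∘ f) a b := by
  obtain ⟨K, hK⟩ := hg.locallyLipschitzOn.exists_lipschitzOnWith_of_compact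
    (isCompact_uIcc.image_of_continuousOn hf.continuousOn)
  exact hK.comp_absolutelyContinuousOnInterval hf

section ExpPrimitive

variable {α : ℝ → ℝ} {a b : ℝ}

theorem IntervalIntegrable.mul_exp_integral (hα : IntervalIntegrable α volume a b) :
    IntervalIntegrable (fun x ↦ α x * Real.exp (∫ t in a..x, α t)) volume a b :=
  hα.mul_continuousOn <| Real.continuous_exp.comp_continuousOn
    (hα.absolutelyContinuousOnInterval_intervalIntegral left_mem_uIcc).continuousOn

namespace intervalIntegral

/-- `α` is only integrable, so `exp (∫ α)` is merely absolutely continuous, with derivative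
`α x * exp (∫ α)` almost everywhere by Lebesgue differentiation. -/
theorem integral_mul_exp_integral {c d : ℝ} (hα : IntervalIntegrable α volume c d)
    (ha : a ∈ uIcc c d) (hb : b ∈ uIcc c d) :
    ∫ x in a..b, α x * Real.exp (∫ t in c..x, α t)
      = Real.exp (∫ t in c..b, α t) - Real.exp (∫ t in c..a, α t) := by
  have hA : AbsolutelyContinuousOnInterval (fun x ↦ ∫ t in c..x, α t) a b :=
    (hα.absolutelyContinuousOnInterval_intervalIntegral left_mem_uIcc).mono
      (uIcc_subset_uIcc ha hb)
  refine .trans ?_ (Real.contDiff_exp.locallyLipschitz.comp_absolutelyContinuousOnInterval hA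
    |>.integral_deriv_eq_sub)
  refine integral_congr_ae ?_
  filter_upwards [hα.ae_hasDerivAt_integral] with x hx hxab
  have hxcd : x ∈ uIcc c d := uIcc_subset_uIcc ha hb (uIoc_subset_uIcc hxab)
  rw [Function.comp_def, ((hx hxcd c left_mem_uIcc).exp).deriv, mul_comm]

theorem integral_indicator_Ici {E : Type*} [NormedAddCommGroup E] [NormedSpace ℝ E]
    {f : ℝ → E} {τ : ℝ} (hab : a ≤ b) (haτ : a ≤ τ) :
    ∫ x in a..b, (Ici τ).indicator f x = ∫ x in Ioc τ b, f x := by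
  rw [integral_of_le hab, setIntegral_indicator measurableSet_Ici]
  refine setIntegral_congr_set ?_
  have h := (ae_eq_refl (Ioc a b)).inter (Ioi_ae_eq_Ici (a := τ) (μ := volume)).symm
  rwa [Ioc_inter_Ioi, max_eq_right haτ] at h

theorem integral_indicator_mul_exp_integral (hα : IntervalIntegrable α volume a b) (hab : a ≤ b)
    {τ : ℝ} (haτ : a ≤ τ) :
    ∫ x in a..b, (Ici τ).indicator (fun x ↦ α x * Real.exp (∫ t in a..x, α t)) x
      = if τ ≤ b then Real.exp (∫ t in a..b, α t) - Real.exp (∫ t in a..τ, α t) else 0 := by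
  rw [integral_indicator_Ici hab haτ]
  split_ifs with hτb
  · rw [← integral_of_le hτb, integral_mul_exp_integral hα (uIcc_of_le hab ▸ ⟨haτ, hτb⟩)
      right_mem_uIcc]
  · rw [Ioc_eq_empty (not_lt.2 (not_le.1 hτb).le), Measure.restrict_empty, integral_zero_measure]

theorem integral_mul_exp_integral_mul_one_add_sum {ι : Type*} (s : Finset ι) (τ w : ι → ℝ)
    (hα : IntervalIntegrable α volume a b) (hab : a ≤ b) (hτ : ∀ i ∈ s, a ≤ τ i) :
    ∫ x in a..b, α x * Real.exp (∫ t in a..x, α t) * (1 + ∑ i ∈ s, if τ i ≤ x then w i else 0)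
      = Real.exp (∫ t in a..b, α t) - 1 + ∑ i ∈ s, if τ i ≤ b
          then w i * (Real.exp (∫ t in a..b, α t) - Real.exp (∫ t in a..τ i, α t)) else 0 := by
  set g : ℝ → ℝ := fun x ↦ α x * Real.exp (∫ t in a..x, α t)
  have hg : IntervalIntegrable g volume a b := hα.mul_exp_integral
  have hjump : ∀ i ∈ s, IntervalIntegrable (fun x ↦ w i * (Ici (τ i)).indicator g x) volume a b :=
    fun i _ ↦ (intervalIntegrable_iff.2 ((intervalIntegrable_iff.1 hg).indicator
      measurableSet_Ici)).const_mul _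
  have hsplit : ∀ x, g x * (1 + ∑ i ∈ s, if τ i ≤ x then w i else 0)
      = g x + ∑ i ∈ s, w i * (Ici (τ i)).indicator g x := fun x ↦ by
    rw [mul_add, mul_one, Finset.mul_sum]
    congr 1
    refine Finset.sum_congr rfl fun i _ ↦ ?_
    by_cases h : τ i ≤ x <;> simp [h, mul_comm]
  rw [funext hsplit, integral_add hg
    (by simpa only [Finset.sum_fn] using IntervalIntegrable.sum _ hjump),
    integral_finsetSum hjump, integral_mul_exp_integral hα left_mem_uIcc right_mem_uIcc,
    integral_same, Real.exp_zero]
  congr 1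
  refine Finset.sum_congr rfl fun i hi ↦ ?_
  rw [integral_const_mul, integral_indicator_mul_exp_integral hα hab (hτ i hi), mul_ite, mul_zero]

end intervalIntegral

end ExpPrimitive

theorem Finset.filter_Icc_one_eq_Icc_card {p : ℕ → Prop} [DecidablePred p] {n : ℕ}
    (hp : ∀ i j, 1 ≤ i → i ≤ j → j ≤ n → p j → p i) :
    (Finset.Icc 1 n).filter p = Finset.Icc 1 ((Finset.Icc 1 n).filter p).card := by
  refine Finset.eq_of_subset_of_card_le (fun i hi ↦ ?_) (by simp)
  obtain ⟨hi, hpi⟩ := Finset.mem_filter.1 hi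
  obtain ⟨hi1, hin⟩ := Finset.mem_Icc.1 hi
  have hsub : Finset.Icc 1 i ⊆ (Finset.Icc 1 n).filter p := fun j hj ↦ by
    obtain ⟨hj1, hji⟩ := Finset.mem_Icc.1 hj
    exact Finset.mem_filter.2 ⟨Finset.mem_Icc.2 ⟨hj1, hji.trans hin⟩, hp j i hj1 hji hin hpi⟩
  have := Finset.card_le_card hsub
  rw [Nat.card_Icc, add_tsub_cancel_right] at this
  exact Finset.mem_Icc.2 ⟨hi1, this⟩

theorem one_add_mul_sum_Icc_pow {R : Type*} [CommRing R] (σ : R) (m : ℕ) :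
    1 + σ * ∑ i ∈ Finset.Icc 1 m, (1 + σ) ^ (i - 1) = (1 + σ) ^ m := by
  induction m with
  | zero => simp
  | succ m ih =>
    rw [Finset.sum_Icc_succ_top (by omega), Nat.add_sub_cancel, pow_succ, ← ih]
    ring

theorem MonotoneOn.one_add_pow_card_filter_le {β R : Type*} [LinearOrder β] [CommRing R]
    {t : ℕ → β} {n : ℕ} (ht : MonotoneOn t (Set.Icc 1 n)) (σ : R) (s : β) :
    (1 + σ) ^ ((Finset.Icc 1 n).filter (fun i ↦ t i ≤ s)).card
      = 1 + σ * ∑ i ∈ (Finset.Icc 1 n).filter (fun i ↦ t i ≤ s), (1 + σ) ^ (i - 1) := by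
  have hP := Finset.filter_Icc_one_eq_Icc_card (p := fun i ↦ t i ≤ s)
    fun i j hi hij hjn hj ↦ (ht ⟨hi, hij.trans hjn⟩ ⟨hi.trans hij, hjn⟩ hij).trans hj
  rw [← one_add_mul_sum_Icc_pow, ← hP]

theorem linear_jump_sde_solution_general
    (T : ℝ) (α : ℝ → ℝ)
    (hα : IntervalIntegrable α volume 0 T)
    (σ x₀ : ℝ) (n : ℕ) (tj : ℕ → ℝ) (h1 : 0 < tj 1)
    (hmono : ∀ i, 1 ≤ i → i < n → tj i < tj (i + 1))
    (N : ℝ → ℕ)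
    (hN : ∀ r, N r = ((Finset.Icc 1 n).filter (fun i => tj i ≤ r)).card)
    (S : ℝ → ℝ)
    (hS : ∀ r, S r = x₀ * Real.exp (∫ s in (0:ℝ)..r, α s) * (1 + σ) ^ (N r)) :
    ∀ r ∈ Icc (0:ℝ) T,
      S r = x₀ + (∫ s in (0:ℝ)..r, α s * S s) +
        σ * ∑ i ∈ (Finset.Icc 1 n).filter (fun i => tj i ≤ r),
          x₀ * Real.exp (∫ s in (0:ℝ)..tj i, α s) * (1 + σ) ^ (i - 1) := by
  rintro r ⟨hr0, hrT⟩
  have htj : MonotoneOn tj (Set.Icc 1 n) := monotoneOn_of_le_add_one ordConnected_Icc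
    fun i _ hi hi1 ↦ (hmono i hi.1 (Nat.lt_of_succ_le hi1.2)).le
  have htj_nonneg : ∀ i ∈ Finset.Icc 1 n, 0 ≤ tj i := fun i hi ↦ by
    obtain ⟨hi1, hin⟩ := Finset.mem_Icc.1 hi
    exact h1.le.trans (htj ⟨le_rfl, hi1.trans hin⟩ ⟨hi1, hin⟩ hi1)
  have hαr : IntervalIntegrable α volume 0 r :=
    hα.mono_set (uIcc_subset_uIcc left_mem_uIcc (uIcc_of_le (hr0.trans hrT) ▸ ⟨hr0, hrT⟩))
  have hαS : ∀ s, α s * S s = x₀ * (α s * Real.exp (∫ t in (0:ℝ)..s, α t) *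
      (1 + ∑ i ∈ Finset.Icc 1 n, if tj i ≤ s then σ * (1 + σ) ^ (i - 1) else 0)) := fun s ↦ by
    rw [hS, hN, htj.one_add_pow_card_filter_le, Finset.sum_filter, Finset.mul_sum]
    simp only [mul_ite, mul_zero]
    ring
  rw [funext hαS, intervalIntegral.integral_const_mul,
    intervalIntegral.integral_mul_exp_integral_mul_one_add_sum _ _ _ hαr hr0 htj_nonneg, hS, hN,
    htj.one_add_pow_card_filter_le, ← Finset.sum_filter]
  have hjumps : ∀ E : ℝ → ℝ, x₀ * ∑ i ∈ (Finset.Icc 1 n).filter (fun i ↦ tj i ≤ r),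
        σ * (1 + σ) ^ (i - 1) * (E r - E (tj i))
      + σ * ∑ i ∈ (Finset.Icc 1 n).filter (fun i ↦ tj i ≤ r), x₀ * E (tj i) * (1 + σ) ^ (i - 1)
      = x₀ * E r * σ * ∑ i ∈ (Finset.Icc 1 n).filter (fun i ↦ tj i ≤ r), (1 + σ) ^ (i - 1) :=
    fun E ↦ by
      simp only [Finset.mul_sum, ← Finset.sum_add_distrib]
      exact Finset.sum_congr rfl fun _ _ ↦ by ring
  linear_combination -hjumps fun x ↦ Real.exp (∫ t in (0:ℝ)..x, α t)

/-- Pathwise solution of the linear jump equation `dS_t = α_t S_t dt + σ S_{t−} dN_t`,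
`S₀ = x₀`, when the jump times are exactly `0 < t₁ < ⋯ < tₙ ≤ T`: the function
`S_t = x₀ exp(∫₀ᵗ α)(1+σ)^{N_t}` satisfies
`S_t = x₀ + ∫₀ᵗ α_s S_s ds + σ Σ_{i : t_i ≤ t} x₀ exp(∫₀^{t_i} α)(1+σ)^{i−1}`. -/
theorem linear_jump_sde_solution
    (T : ℝ) (hT : 0 < T) (α : ℝ → ℝ)
    (hα : IntervalIntegrable α volume 0 T)
    (σ x₀ : ℝ) (n : ℕ) (hn : 1 ≤ n) (tj : ℕ → ℝ) (h1 : 0 < tj 1)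
    (hmono : ∀ i, 1 ≤ i → i < n → tj i < tj (i + 1)) (htn : tj n ≤ T)
    (N : ℝ → ℕ)
    (hN : ∀ r, N r = ((Finset.Icc 1 n).filter (fun i => tj i ≤ r)).card)
    (S : ℝ → ℝ)
    (hS : ∀ r, S r = x₀ * Real.exp (∫ s in (0:ℝ)..r, α s) * (1 + σ) ^ (N r)) :
    ∀ r ∈ Icc (0:ℝ) T,
      S r = x₀ + (∫ s in (0:ℝ)..r, α s * S s) +
        σ * ∑ i ∈ (Finset.Icc 1 n).filter (fun i => tj i ≤ r),
          x₀ * Real.exp (∫ s in (0:ℝ)..tj i, α s) * (1 + σ) ^ (i - 1) :=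
  linear_jump_sde_solution_general T α hα σ x₀ n tj h1 hmono N hN S hS
end

section
/- Let d ≥ 1, T > 0, let A, M be d×d real matrices with AM = MA, and let 0 < t₁ < ⋯ < tₙ ≤ T. Let N_t = #{i : t_i ≤ t} and define K_t = exp(tA) · (I + M)^{N_t} for t ∈ [0,T]. Then for every t ∈ [0,T]: K_t = I + ∫₀ᵗ A K_s ds + Σ_{i : t_i ≤ t} M · exp(t_i A) · (I+M)^{i−1}, where exp(t_i A) · (I+M)^{i−1} is the left limit K_{t_i−}. -/
/-!
On an interval between consecutive jump times, `K_s = exp(sA)(I+M)^j` for a fixed `j`, and its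
derivative is `A K_s`, so the integral of `A K` over that interval is the increment of
`exp(sA)(I+M)^j` across it. At the jump time `t_{j+1}` the exponent goes up by one, and since `M`
commutes with `exp(t_{j+1} A)` the jump is `M exp(t_{j+1} A)(I+M)^j = M K_{t_{j+1}−}`. Summing the
increments over the intervals and the jumps in between telescopes to `K_t − I`.
-/

open MeasureTheory Set

section JumpTimes

variable {α : Type*} [Preorder α] [DecidableLE α] {t : ℕ → α} {n : ℕ}

def jumpCount (t : ℕ → α) (n : ℕ) (s : α) : ℕ :=
  ((Finset.Icc 1 n).filter (fun i => t i ≤ s)).card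

theorem filter_le_eq_Icc_jumpCount (ht : MonotoneOn t (Icc 1 n)) (s : α) :
    (Finset.Icc 1 n).filter (fun i => t i ≤ s) = Finset.Icc 1 (jumpCount t n s) := by
  set S := (Finset.Icc 1 n).filter (fun i => t i ≤ s)
  have hsub : S ⊆ Finset.Icc 1 S.card := by
    intro i hi
    obtain ⟨⟨hi1, hin⟩, his⟩ : (1 ≤ i ∧ i ≤ n) ∧ t i ≤ s := by simpa [S] using hi
    have hdown : Finset.Icc 1 i ⊆ S := by
      intro k hk
      obtain ⟨hk1, hki⟩ := Finset.mem_Icc.1 hk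
      simpa [S] using ⟨⟨hk1, hki.trans hin⟩, (ht ⟨hk1, hki.trans hin⟩ ⟨hi1, hin⟩ hki).trans his⟩
    simpa [hi1] using Finset.card_le_card hdown
  exact Finset.eq_of_subset_of_card_le hsub (by simp [S, jumpCount])

theorem jumpCount_eq (ht : MonotoneOn t (Icc 1 n)) {j : ℕ} {s : α} (hjn : j ≤ n)
    (hjs : 1 ≤ j → t j ≤ s) (hsj : j < n → s < t (j + 1)) : jumpCount t n s = j := by
  suffices (Finset.Icc 1 n).filter (fun i => t i ≤ s) = Finset.Icc 1 j by simp [jumpCount, this]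
  ext i
  simp only [Finset.mem_filter, Finset.mem_Icc]
  constructor
  · rintro ⟨⟨hi1, hin⟩, his⟩
    refine ⟨hi1, not_lt.1 fun hji => ?_⟩
    exact (hsj (by omega)).not_ge ((ht ⟨by omega, by omega⟩ ⟨hi1, hin⟩ hji).trans his)
  · rintro ⟨hi1, hij⟩
    exact ⟨⟨hi1, hij.trans hjn⟩, (ht ⟨hi1, by omega⟩ ⟨by omega, hjn⟩ hij).trans (hjs (by omega))⟩

end JumpTimes

theorem exists_partition_jumpCount {t : ℕ → ℝ} {n : ℕ} (ht : MonotoneOn t (Icc 1 n))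
    (ht1 : 0 ≤ t 1) {r : ℝ} (hr : 0 ≤ r) :
    ∃ u : ℕ → ℝ, u 0 = 0 ∧ u (jumpCount t n r + 1) = r ∧
      (∀ j ∈ Finset.Icc 1 (jumpCount t n r), u j = t j) ∧
      ∀ j ≤ jumpCount t n r, u j ≤ u (j + 1) ∧
        ∀ s ∈ Ico (u j) (u (j + 1)), jumpCount t n s = j := by
  have hfilter := filter_le_eq_Icc_jumpCount ht r
  set m := jumpCount t n r
  have hmem (i : ℕ) : (i ∈ Finset.Icc 1 n ∧ t i ≤ r) ↔ i ∈ Finset.Icc 1 m := by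
    rw [← hfilter, Finset.mem_filter]
  have hmn : m ≤ n := (Finset.card_filter_le _ _).trans (by simp)
  have htr (j : ℕ) (hj : j ∈ Finset.Icc 1 m) : t j ≤ r := ((hmem j).2 hj).2
  have hrt (hm : m < n) : r < t (m + 1) :=
    not_le.1 fun h => by simpa using (hmem (m + 1)).1 ⟨by simp; omega, h⟩
  set u : ℕ → ℝ := fun j => if j = 0 then 0 else if j ≤ m then t j else r
  have hut (j : ℕ) (hj : j ∈ Finset.Icc 1 m) : u j = t j := by
    obtain ⟨hj1, hjm⟩ := Finset.mem_Icc.1 hj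
    simp [u, hjm, Nat.one_le_iff_ne_zero.1 hj1]
  have hur : u (m + 1) = r := by simp [u]
  have hle (j : ℕ) (hj : j ≤ m) : u j ≤ u (j + 1) := by
    rcases Nat.eq_zero_or_pos j with rfl | hj0
    · rcases Nat.eq_zero_or_pos m with hm | hm
      · simpa [u, hm] using hr
      · simpa [u, hut 1 (by simp; omega)] using ht1
    rcases hj.lt_or_eq with hjm | hjm
    · rw [hut j (by simp; omega), hut (j + 1) (by simp; omega)]
      exact ht ⟨by omega, by omega⟩ ⟨by omega, by omega⟩ (by omega)
    · rw [hut j (by simp; omega), hjm, hur]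
      exact htr m (by simp; omega)
  have hnext (j : ℕ) (hj : j ≤ m) (hjn : j < n) : u (j + 1) ≤ t (j + 1) := by
    rcases hj.lt_or_eq with hjm | hjm
    · exact (hut (j + 1) (by simp; omega)).le
    · rw [hjm, hur]
      exact (hrt (hjm ▸ hjn)).le
  refine ⟨u, by simp [u], hur, hut, fun j hj => ⟨hle j hj, fun s hs => ?_⟩⟩
  refine jumpCount_eq ht (hj.trans hmn) (fun hj1 => ?_) (fun hjn => hs.2.trans_le (hnext j hj hjn))
  exact hut j (Finset.mem_Icc.2 ⟨hj1, hj⟩) ▸ hs.1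

theorem sum_range_sub_add_sum_Icc_sub {α G : Type*} [AddCommGroup G] (F : ℕ → α → G)
    (u : ℕ → α) (m : ℕ) :
    ∑ j ∈ Finset.range (m + 1), (F j (u (j + 1)) - F j (u j)) +
        ∑ j ∈ Finset.Icc 1 m, (F j (u j) - F (j - 1) (u j)) =
      F m (u (m + 1)) - F 0 (u 0) := by
  induction m with
  | zero => simp
  | succ m ih =>
    rw [Finset.sum_range_succ, Finset.sum_Icc_succ_top (by omega), add_add_add_comm, ih,
      Nat.add_sub_cancel]
    abel

theorem integral_add_sum_jumps {E : Type*} [NormedAddCommGroup E] [NormedSpace ℝ E]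
    [CompleteSpace E] {F f : ℕ → ℝ → E} {g : ℝ → E} {u : ℕ → ℝ} {m : ℕ}
    (hF : ∀ j ≤ m, ∀ x ∈ uIcc (u j) (u (j + 1)), HasDerivAt (F j) (f j x) x)
    (hf : ∀ j ≤ m, IntervalIntegrable (f j) volume (u j) (u (j + 1)))
    (hg : ∀ j ≤ m, EqOn g (f j) (uIoo (u j) (u (j + 1)))) :
    (∫ x in u 0..u (m + 1), g x) + ∑ j ∈ Finset.Icc 1 m, (F j (u j) - F (j - 1) (u j)) =
      F m (u (m + 1)) - F 0 (u 0) := by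
  have hint (j : ℕ) (hj : j < m + 1) : IntervalIntegrable g volume (u j) (u (j + 1)) :=
    (hf j (by omega)).congr_uIoo (hg j (by omega)).symm
  have hpiece (j : ℕ) (hj : j ∈ Finset.range (m + 1)) :
      ∫ x in u j..u (j + 1), g x = F j (u (j + 1)) - F j (u j) := by
    have hjm : j ≤ m := Nat.lt_succ_iff.1 (Finset.mem_range.1 hj)
    exact (intervalIntegral.integral_congr_uIoo (hg j hjm)).trans
      (intervalIntegral.integral_eq_sub_of_hasDerivAt (hF j hjm) (hf j hjm))
  rw [← intervalIntegral.sum_integral_adjacent_intervals hint, Finset.sum_congr rfl hpiece,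
    sum_range_sub_add_sum_Icc_sub]

theorem Commute.mul_one_add_pow_succ_sub {R : Type*} [Ring R] {M X : R} (h : Commute M X)
    (j : ℕ) : X * (1 + M) ^ (j + 1) - X * (1 + M) ^ j = M * (X * (1 + M) ^ j) := by
  have hc : Commute M (X * (1 + M) ^ j) :=
    h.mul_right (((Commute.one_right M).add_right (Commute.refl M)).pow_right j)
  rw [pow_succ, ← mul_assoc, mul_one_add, add_sub_cancel_left, hc.eq]

section

-- The statement involves no norm; any submultiplicative one gives access to the calculus of `exp`.
attribute [local instance] Matrix.linftyOpNormedRing Matrix.linftyOpNormedAlgebra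

theorem Matrix.hasDerivAt_exp_smul_mul {ι : Type*} [Fintype ι] [DecidableEq ι]
    (A C : Matrix ι ι ℝ) (t : ℝ) :
    HasDerivAt (fun s : ℝ => NormedSpace.exp (s • A) * C)
      (A * (NormedSpace.exp (t • A) * C)) t := by
  rw [← mul_assoc]
  exact (hasDerivAt_exp_smul_const' A t).mul_const C

end

attribute [local instance] Matrix.normedAddCommGroup Matrix.normedSpace

theorem matrix_linear_jump_solution_general
    (d : ℕ) (T : ℝ)
    (A M : Matrix (Fin d) (Fin d) ℝ) (hAM : A * M = M * A)
    (n : ℕ) (tj : ℕ → ℝ) (h1 : 0 < tj 1)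
    (hmono : ∀ i, 1 ≤ i → i < n → tj i < tj (i + 1))
    (N : ℝ → ℕ)
    (hN : ∀ r, N r = ((Finset.Icc 1 n).filter (fun i => tj i ≤ r)).card)
    (K : ℝ → Matrix (Fin d) (Fin d) ℝ)
    (hK : ∀ r, K r = NormedSpace.exp (r • A) * (1 + M) ^ (N r)) :
    ∀ r ∈ Icc (0:ℝ) T,
      K r = 1 + (∫ s in (0:ℝ)..r, A * K s) +
        ∑ i ∈ (Finset.Icc 1 n).filter (fun i => tj i ≤ r),
          M * (NormedSpace.exp (tj i • A) * (1 + M) ^ (i - 1)) := by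
  rintro r ⟨hr, -⟩
  have ht : MonotoneOn tj (Icc 1 n) :=
    (strictMonoOn_of_lt_add_one ordConnected_Icc fun i _ hi hi' => hmono i hi.1 hi'.2).monotoneOn
  obtain rfl : N = jumpCount tj n := funext hN
  obtain ⟨u, hu0, hur, hut, hpart⟩ := exists_partition_jumpCount ht h1.le hr
  set F : ℕ → ℝ → Matrix (Fin d) (Fin d) ℝ := fun j s => NormedSpace.exp (s • A) * (1 + M) ^ j
  have hderiv (j : ℕ) (s : ℝ) : HasDerivAt (F j) (A * F j s) s :=
    Matrix.hasDerivAt_exp_smul_mul A _ s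
  have hcont (j : ℕ) : Continuous (fun s => A * F j s) :=
    continuous_const.mul (continuous_iff_continuousAt.2 fun s => (hderiv j s).continuousAt)
  have hftc := integral_add_sum_jumps (F := F) (g := fun s => A * K s)
    (fun j _ x _ => hderiv j x) (fun j _ => (hcont j).intervalIntegrable _ _)
    (fun j hj s hs => by
      rw [uIoo_of_le (hpart j hj).1] at hs
      simp only [hK, (hpart j hj).2 s (Ioo_subset_Ico_self hs), F])
  have hjumps : ∑ i ∈ (Finset.Icc 1 n).filter (fun i => tj i ≤ r),
      M * (NormedSpace.exp (tj i • A) * (1 + M) ^ (i - 1)) =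
        ∑ j ∈ Finset.Icc 1 (jumpCount tj n r), (F j (u j) - F (j - 1) (u j)) := by
    rw [filter_le_eq_Icc_jumpCount ht r]
    refine Finset.sum_congr rfl fun i hi => ?_
    obtain ⟨j, rfl⟩ : ∃ j, i = j + 1 := Nat.exists_eq_add_one.2 (Finset.mem_Icc.1 hi).1
    rw [hut _ hi, Nat.add_sub_cancel]
    have hMA : Commute M A := hAM.symm
    exact (hMA.smul_right _).exp_right.mul_one_add_pow_succ_sub j |>.symm
  rw [hu0, hur] at hftc
  rw [add_assoc, hjumps, hftc]
  simp [F, hK]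

/-- Pathwise solution of the linear matrix jump equation
`dK_t = A K_t dt + M K_{t−} dN_t`, `K₀ = I`, with commuting matrices `AM = MA` and jump
times `0 < t₁ < ⋯ < tₙ ≤ T`: the function `K_t = exp(tA)(I+M)^{N_t}` satisfies
`K_t = I + ∫₀ᵗ A K_s ds + Σ_{i : t_i ≤ t} M·exp(t_i A)(I+M)^{i−1}`. -/
theorem matrix_linear_jump_solution
    (d : ℕ) (hd : 1 ≤ d) (T : ℝ) (hT : 0 < T)
    (A M : Matrix (Fin d) (Fin d) ℝ) (hAM : A * M = M * A)
    (n : ℕ) (hn : 1 ≤ n) (tj : ℕ → ℝ) (h1 : 0 < tj 1)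
    (hmono : ∀ i, 1 ≤ i → i < n → tj i < tj (i + 1)) (htn : tj n ≤ T)
    (N : ℝ → ℕ)
    (hN : ∀ r, N r = ((Finset.Icc 1 n).filter (fun i => tj i ≤ r)).card)
    (K : ℝ → Matrix (Fin d) (Fin d) ℝ)
    (hK : ∀ r, K r = NormedSpace.exp (r • A) * (1 + M) ^ (N r)) :
    ∀ r ∈ Icc (0:ℝ) T,
      K r = 1 + (∫ s in (0:ℝ)..r, A * K s) +
        ∑ i ∈ (Finset.Icc 1 n).filter (fun i => tj i ≤ r),
          M * (NormedSpace.exp (tj i • A) * (1 + M) ^ (i - 1)) :=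
  matrix_linear_jump_solution_general d T A M hAM n tj h1 hmono N hN K hK
end

section
/- Let f : ℝ → ℝ be twice continuously differentiable with bounded second derivative, and let g : ℝ → ℝ be differentiable and bounded. If for every x ∈ ℝ, |g'(x) f(x) − f'(x) g(x)| > (1/2) · (sup_y |f''(y)|) · (sup_y |g(y)|)², then for every x ∈ ℝ, f(x + g(x)) − f(x) − g'(x) f(x) ≠ 0. -/
/-!
If `φ(x) = 0`, then `g'(x) f(x) = f(x + g(x)) - f(x)`, so the Wronskian at `x` equals the
first-order Taylor remainder `f(x + g(x)) - f(x) - f'(x) g(x)`. The Lagrange form of that remainder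
bounds it by `½ ‖f''‖_∞ g(x)² ≤ ½ ‖f''‖_∞ ‖g‖_∞²`, contradicting the hypothesis.
-/

open Set

lemma taylorWithinEval_one_of_differentiableAt {f : ℝ → ℝ} {s : Set ℝ} {x₀ : ℝ}
    (hs : UniqueDiffWithinAt ℝ s x₀) (hf : DifferentiableAt ℝ f x₀) (x : ℝ) :
    taylorWithinEval f 1 s x₀ x = f x₀ + deriv f x₀ * (x - x₀) := by
  simp [iteratedDerivWithin_one, hf.derivWithin hs, mul_comm]

theorem abs_sub_sub_deriv_mul_le {f : ℝ → ℝ} (hf : ContDiff ℝ 2 f) {C : ℝ}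
    (hC : ∀ y, |deriv (deriv f) y| ≤ C) (x h : ℝ) :
    |f (x + h) - f x - deriv f x * h| ≤ C / 2 * h ^ 2 := by
  rcases eq_or_ne h 0 with rfl | hh
  · simp
  have hx : x ≠ x + h := by simpa using hh
  obtain ⟨ξ, -, hξ⟩ := taylor_mean_remainder_lagrange_iteratedDeriv (n := 1) hx hf.contDiffOn
  rw [taylorWithinEval_one_of_differentiableAt (uniqueDiffOn_uIcc hx x left_mem_uIcc)
    (hf.differentiable two_ne_zero x), iteratedDeriv_succ, iteratedDeriv_one] at hξ
  have hrem : f (x + h) - f x - deriv f x * h = deriv (deriv f) ξ * h ^ 2 / 2 := by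
    simpa [Nat.factorial, sub_sub] using hξ
  calc |f (x + h) - f x - deriv f x * h| = |deriv (deriv f) ξ| * h ^ 2 / 2 := by
        rw [hrem, abs_div, abs_mul, abs_of_nonneg (sq_nonneg h), abs_two]
    _ ≤ C * h ^ 2 / 2 := by gcongr; exact hC ξ
    _ = C / 2 * h ^ 2 := by ring

theorem wronskian_criterion_general
    (f g : ℝ → ℝ) (hf : ContDiff ℝ 2 f)
    (hf'' : ∃ C, ∀ y, |deriv (deriv f) y| ≤ C)
    (hgb : ∃ C, ∀ y, |g y| ≤ C)
    (h : ∀ x, (1 / 2) * (⨆ y, |deriv (deriv f) y|) * (⨆ y, |g y|) ^ 2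
        < |deriv g x * f x - deriv f x * g x|) :
    ∀ x, f (x + g x) - f x - deriv g x * f x ≠ 0 := by
  obtain ⟨C₀, hC₀⟩ := hf''
  obtain ⟨D₀, hD₀⟩ := hgb
  set C := ⨆ y, |deriv (deriv f) y|
  set D := ⨆ y, |g y|
  have hC : ∀ y, |deriv (deriv f) y| ≤ C := le_ciSup ⟨C₀, forall_mem_range.2 hC₀⟩
  have hD : ∀ y, |g y| ≤ D := le_ciSup ⟨D₀, forall_mem_range.2 hD₀⟩
  have hC_nonneg : 0 ≤ C := (abs_nonneg _).trans (hC 0)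
  intro x hφ
  have hW : deriv g x * f x - deriv f x * g x = f (x + g x) - f x - deriv f x * g x := by
    linarith
  have hW_le : |deriv g x * f x - deriv f x * g x| ≤ C / 2 * D ^ 2 :=
    calc |deriv g x * f x - deriv f x * g x| = |f (x + g x) - f x - deriv f x * g x| := by
          rw [hW]
      _ ≤ C / 2 * g x ^ 2 := abs_sub_sub_deriv_mul_le hf hC x (g x)
      _ ≤ C / 2 * D ^ 2 :=
          mul_le_mul_of_nonneg_left (sq_le_sq.2 ((hD x).trans (le_abs_self D))) (by linarith)
  linarith [h x]

/-- Wronskian criterion: if `f` is `C²` with bounded second derivative, `g` is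
differentiable and bounded, and the Wronskian `W(f,g) = g'f − f'g` satisfies
`|W(f,g)(x)| > (1/2)‖f''‖_∞‖g‖_∞²` for all `x`, then the jump-perturbation function
`φ(x) = f(x + g(x)) − f(x) − g'(x)f(x)` never vanishes. -/
theorem wronskian_criterion
    (f g : ℝ → ℝ) (hf : ContDiff ℝ 2 f)
    (hf'' : ∃ C, ∀ y, |deriv (deriv f) y| ≤ C)
    (hg : Differentiable ℝ g) (hgb : ∃ C, ∀ y, |g y| ≤ C)
    (h : ∀ x, (1 / 2) * (⨆ y, |deriv (deriv f) y|) * (⨆ y, |g y|) ^ 2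
        < |deriv g x * f x - deriv f x * g x|) :
    ∀ x, f (x + g x) - f x - deriv g x * f x ≠ 0 :=
  wronskian_criterion_general f g hf hf'' hgb h
end

section
/- For every x ∈ ℝ, cos(x + sin x) − cos x − cos²x ≠ 0. -/
/-!
Taylor's formula with a Lipschitz derivative gives
`f (x + h) = f x + f' x * h + R` with `|R| ≤ M / 2 * h ^ 2`, so the jump perturbation
`f (x + g x) - f x - g' x * f x` equals `-W(f, g)(x) + R`, where `W(f, g) = f g' - f' g` is the
Wronskian. For `f = cos` and `g = sin` the Wronskian is `cos² + sin² = 1`, while the remainder is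
at most `sin² x / 2 ≤ 1 / 2`.
-/

open Set NNReal

theorem abs_sub_sub_deriv_mul_le_of_lipschitzWith {f f' : ℝ → ℝ} {M : ℝ≥0}
    (hf : ∀ y, HasDerivAt f (f' y) y) (hf' : LipschitzWith M f') (x h : ℝ) :
    |f (x + h) - f x - f' x * h| ≤ M / 2 * h ^ 2 := by
  set R : ℝ → ℝ := fun t ↦ f (x + t * h) - f x - f' x * (t * h)
  have hR : ∀ t, HasDerivAt R (f' (x + t * h) * h - f' x * h) t := fun t ↦ by
    have hth : HasDerivAt (fun t ↦ t * h) h t := hasDerivAt_mul_const h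
    exact (((hf (x + t * h)).comp t (hth.const_add x)).sub_const (f x)).sub (hth.const_mul (f' x))
  have hB : ∀ t, HasDerivAt (fun t : ℝ ↦ M / 2 * h ^ 2 * t ^ 2) (M * h ^ 2 * t) t := fun t ↦
    ((hasDerivAt_pow 2 t).const_mul _).congr_deriv (by push_cast; ring)
  have bound : ∀ t ∈ Ico (0 : ℝ) 1, ‖f' (x + t * h) * h - f' x * h‖ ≤ M * h ^ 2 * t := by
    intro t ht
    have hlip := hf'.dist_le_mul (x + t * h) x
    rw [Real.dist_eq, Real.dist_eq, add_sub_cancel_left, abs_mul, abs_of_nonneg ht.1] at hlip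
    rw [Real.norm_eq_abs, ← sub_mul, abs_mul]
    calc |f' (x + t * h) - f' x| * |h| ≤ M * (t * |h|) * |h| := by gcongr
      _ = M * h ^ 2 * t := by rw [← sq_abs h]; ring
  have := image_norm_le_of_norm_deriv_right_le_deriv_boundary
    (fun t _ ↦ (hR t).continuousAt.continuousWithinAt) (fun t _ ↦ (hR t).hasDerivWithinAt)
    (by simp [R]) hB bound (right_mem_Icc.2 zero_le_one)
  simpa [R] using this

/-- With `h = g x` and `a = g'(x)`, the right-hand side of `hW` is the Wronskian `W(f, g)(x)`. -/
theorem jump_perturbation_neg_of_wronskian {f f' : ℝ → ℝ} {M : ℝ≥0}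
    (hf : ∀ y, HasDerivAt f (f' y) y) (hf' : LipschitzWith M f') {x h a : ℝ}
    (hW : M / 2 * h ^ 2 < a * f x - f' x * h) : f (x + h) - f x - a * f x < 0 := by
  have hTaylor := abs_sub_sub_deriv_mul_le_of_lipschitzWith hf hf' x h
  linarith [le_abs_self (f (x + h) - f x - f' x * h)]

/-- For every `x ∈ ℝ`, `cos(x + sin x) − cos x − cos²x ≠ 0`. -/
theorem cos_sin_jump_perturbation_ne_zero (x : ℝ) :
    Real.cos (x + Real.sin x) - Real.cos x - (Real.cos x) ^ 2 ≠ 0 := by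
  rw [sq]
  refine (jump_perturbation_neg_of_wronskian (M := 1) Real.hasDerivAt_cos
    Real.lipschitzWith_sin.neg ?_).ne
  push_cast
  nlinarith [Real.sin_sq_add_cos_sq x, Real.sin_sq_le_one x]
end
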